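/- arXiv:2304.10123 — 2 statements merged into one kernel-verified Lean document; each statement's English description precedes it below -/
import Mathlib

section
/- Let T_s be the hard thresholding operator onto s-sparse vectors and let x be s-sparse. If u ∈ ℝ^N and z = T_s(u), then ‖z - x‖² ≤ 2 ⟨u - x, z - x⟩. -/
open scoped BigOperators RealInnerProductSpace

/-- A vector is `s`-sparse if it has at most `s` nonzero entries. -/
def Sparse {N : ℕ} (s : ℕ) (v : EuclideanSpace ℝ (Fin N)) : Prop :=
  (Finset.univ.filter (fun i => v i ≠ 0)).card ≤ s

/-- `z` is a hard thresholding of `u` onto `s`-sparse vectors: `z` is `s`-sparse and is a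
closest `s`-sparse vector to `u` in Euclidean norm. -/
def IsHardThresh {N : ℕ} (s : ℕ) (u z : EuclideanSpace ℝ (Fin N)) : Prop :=
  Sparse s z ∧ ∀ y : EuclideanSpace ℝ (Fin N), Sparse s y → ‖u - z‖ ≤ ‖u - y‖

/-- if `x` is `s`-sparse and `z = T_s(u)`, then `‖z-x‖² ≤ 2⟨u-x, z-x⟩`. -/
theorem hardThresh_inner_bound
    (N s : ℕ) (u x z : EuclideanSpace ℝ (Fin N))
    (hx : Sparse s x) (hz : IsHardThresh s u z) :
    ‖z - x‖ ^ 2 ≤ 2 * ⟪u - x, z - x⟫ := by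
  have h := hz.2 x hx
  have h2 : ‖u - z‖ ^ 2 ≤ ‖u - x‖ ^ 2 := pow_le_pow_left₀ (norm_nonneg _) h 2
  have key : ‖z - x‖ ^ 2 = ‖u - x‖ ^ 2 + ‖u - z‖ ^ 2 - 2 * ⟪u - x, u - z⟫ := by
    rw [show z - x = (u - x) - (u - z) by abel, norm_sub_sq_real]
    ring
  have key2 : ⟪u - x, z - x⟫ = ‖u - x‖ ^ 2 - ⟪u - x, u - z⟫ := by
    rw [show z - x = (u - x) - (u - z) by abel, inner_sub_right,
      real_inner_self_eq_norm_sq]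
  rw [key, key2]
  linarith
end

section
/- Let a_1,...,a_m ∈ ℝ^N with ‖a_i‖ = √N and |a_i^T a_j| ≤ K²√N ln² m for i ≠ j, and let A_i = a_i a_i^T. For a permutation τ of [m], define B_τ = ∑_{p≥2} (-1)^p (γ^p/N^p) ∑_{1 ≤ i_1 < ⋯ < i_p ≤ m} A_{τ(i_p)} ⋯ A_{τ(i_1)}, i.e., the sum of all cross terms of order ≥ 2 in the expansion of ∏_{j=m}^{1}(I - γ A_{τ(j)}/N). If 0 < γ ≤ (1/(2m)) (N/(K⁴ ln⁴ m))^{1/2}, then ‖B_τ‖ ≤ 2 γ² m² (K⁴ ln⁴ m / N)^{1/2} for every permutation τ. -/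
open scoped BigOperators RealInnerProductSpace

set_option maxHeartbeats 1000000
set_option synthInstance.maxHeartbeats 1000000

/-- The rank-one operator `a aᵀ : v ↦ ⟨a, v⟩ a` on Euclidean space. -/
noncomputable def rankOne {N : ℕ} (a : EuclideanSpace ℝ (Fin N)) :
    EuclideanSpace ℝ (Fin N) →L[ℝ] EuclideanSpace ℝ (Fin N) :=
  (innerSL ℝ a).smulRight a

/-- The cross terms of order `≥ 2` in the expansion of
`∏_{j=m}^{1} (I - (γ/N) A_{τ(j)})`: the product minus its order-0 and order-1 parts. -/
noncomputable def crossTerms {N : ℕ} (m : ℕ) (γ : ℝ)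
    (a : Fin m → EuclideanSpace ℝ (Fin N)) (τ : Equiv.Perm (Fin m)) :
    EuclideanSpace ℝ (Fin N) →L[ℝ] EuclideanSpace ℝ (Fin N) :=
  ((List.ofFn (fun j : Fin m => 1 - (γ / N) • rankOne (a (τ j)))).reverse).prod
    - 1 + (γ / N) • ∑ j : Fin m, rankOne (a j)

noncomputable def iterProd {M : Type*} [Monoid M] (f : ℕ → M) : ℕ → M
  | 0 => 1
  | (k+1) => f k * iterProd f k

lemma ofFn_reverse_prod {M : Type*} [Monoid M] (f : ℕ → M) (n : ℕ) :
    (List.ofFn (fun j : Fin n => f j)).reverse.prod = iterProd f n := by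
  induction n with
  | zero => simp [iterProd]
  | succ k ih =>
    rw [List.ofFn_succ']
    simp only [List.concat_eq_append, List.reverse_append, List.reverse_cons, List.reverse_nil,
      List.nil_append, List.singleton_append, List.prod_cons, Fin.coe_castSucc, Fin.val_last]
    rw [iterProd, ih]

section Aux
variable {N : ℕ}

lemma rankOne_apply (a v : EuclideanSpace ℝ (Fin N)) : rankOne a v = ⟪a, v⟫ • a := rfl

lemma innerSL_comp_rankOne (x b : EuclideanSpace ℝ (Fin N)) :
    (innerSL ℝ x).comp (rankOne b) = ⟪x, b⟫ • (innerSL ℝ b) := by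
  ext v
  simp [rankOne_apply, real_inner_smul_right, mul_comm, Finset.sum_mul, mul_assoc]

lemma innerSL_comp_rankOne_mul (x b : EuclideanSpace ℝ (Fin N))
    (M : EuclideanSpace ℝ (Fin N) →L[ℝ] EuclideanSpace ℝ (Fin N)) :
    (innerSL ℝ x).comp (rankOne b * M) = ⟪x, b⟫ • ((innerSL ℝ b).comp M) := by
  ext v
  simp [ContinuousLinearMap.mul_apply, rankOne_apply, real_inner_smul_right, mul_comm,
    Finset.sum_mul, mul_assoc]

lemma norm_rankOne_mul_le (b : EuclideanSpace ℝ (Fin N))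
    (M : EuclideanSpace ℝ (Fin N) →L[ℝ] EuclideanSpace ℝ (Fin N)) :
    ‖rankOne b * M‖ ≤ ‖b‖ * ‖(innerSL ℝ b).comp M‖ := by
  refine ContinuousLinearMap.opNorm_le_bound _ (by positivity) (fun v => ?_)
  have : (rankOne b * M) v = ((innerSL ℝ b).comp M v) • b := rfl
  rw [this, norm_smul]
  calc ‖(innerSL ℝ b).comp M v‖ * ‖b‖
      ≤ (‖(innerSL ℝ b).comp M‖ * ‖v‖) * ‖b‖ := by
        gcongr; exact (innerSL ℝ b).comp M |>.le_opNorm v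
    _ = ‖b‖ * ‖(innerSL ℝ b).comp M‖ * ‖v‖ := by ring

lemma comp_sum' {ι : Type*} (s : Finset ι) (L : EuclideanSpace ℝ (Fin N) →L[ℝ] ℝ)
    (A : ι → (EuclideanSpace ℝ (Fin N) →L[ℝ] EuclideanSpace ℝ (Fin N))) :
    L.comp (∑ j ∈ s, A j) = ∑ j ∈ s, L.comp (A j) := by
  ext v
  simp [ContinuousLinearMap.sum_apply]

lemma norm_smul_clm {E F : Type*} [SeminormedAddCommGroup E] [SeminormedAddCommGroup F]
    [NormedSpace ℝ E] [NormedSpace ℝ F] (c : ℝ) (L : E →L[ℝ] F) :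
    ‖c • L‖ = |c| * ‖L‖ := by
  rw [← Real.norm_eq_abs]
  exact norm_smul c L

lemma comp_smul' (c : ℝ) (L : EuclideanSpace ℝ (Fin N) →L[ℝ] ℝ)
    (A : EuclideanSpace ℝ (Fin N) →L[ℝ] EuclideanSpace ℝ (Fin N)) :
    L.comp (c • A) = c • L.comp A := by
  ext v
  simp

end Aux

section Defs
variable {N m : ℕ}

noncomputable def bb (a : Fin m → EuclideanSpace ℝ (Fin N)) (τ : Equiv.Perm (Fin m)) (j : ℕ) :
    EuclideanSpace ℝ (Fin N) :=
  if h : j < m then a (τ ⟨j, h⟩) else 0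

noncomputable def PP (c : ℝ) (a : Fin m → EuclideanSpace ℝ (Fin N)) (τ : Equiv.Perm (Fin m)) :
    ℕ → (EuclideanSpace ℝ (Fin N) →L[ℝ] EuclideanSpace ℝ (Fin N)) :=
  iterProd (fun k => 1 - c • rankOne (bb a τ k))

noncomputable def SS (a : Fin m → EuclideanSpace ℝ (Fin N)) (τ : Equiv.Perm (Fin m)) (k : ℕ) :
    EuclideanSpace ℝ (Fin N) →L[ℝ] EuclideanSpace ℝ (Fin N) :=
  ∑ j ∈ Finset.range k, rankOne (bb a τ j)

noncomputable def EE (c : ℝ) (a : Fin m → EuclideanSpace ℝ (Fin N)) (τ : Equiv.Perm (Fin m))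
    (k : ℕ) : EuclideanSpace ℝ (Fin N) →L[ℝ] EuclideanSpace ℝ (Fin N) :=
  PP c a τ k - 1 + c • SS a τ k

lemma EE_succ (c : ℝ) (a : Fin m → EuclideanSpace ℝ (Fin N)) (τ : Equiv.Perm (Fin m)) (k : ℕ) :
    EE c a τ (k+1) = EE c a τ k + c • (rankOne (bb a τ k) * (1 - PP c a τ k)) := by
  have hP : PP c a τ (k+1) = (1 - c • rankOne (bb a τ k)) * PP c a τ k := rfl
  have hS : SS a τ (k+1) = SS a τ k + rankOne (bb a τ k) := Finset.sum_range_succ _ _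
  have hsm : (c • rankOne (bb a τ k)) * PP c a τ k
      = c • (rankOne (bb a τ k) * PP c a τ k) := by
    ext v; simp [ContinuousLinearMap.mul_apply]
  simp only [EE, hP, hS]
  rw [sub_mul, one_mul, hsm]
  simp only [mul_sub, mul_one, smul_sub, smul_add]
  abel

lemma one_sub_PP (c : ℝ) (a : Fin m → EuclideanSpace ℝ (Fin N)) (τ : Equiv.Perm (Fin m)) (k : ℕ) :
    (1 : EuclideanSpace ℝ (Fin N) →L[ℝ] EuclideanSpace ℝ (Fin N)) - PP c a τ k
      = c • SS a τ k - EE c a τ k := by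
  simp only [EE]
  abel

lemma crossTerms_eq_EE (γ : ℝ) (a : Fin m → EuclideanSpace ℝ (Fin N)) (τ : Equiv.Perm (Fin m)) :
    crossTerms m γ a τ = EE ((γ : ℝ) / N) a τ m := by
  have h1 : (fun j : Fin m => 1 - (γ / N) • rankOne (a (τ j)))
      = fun j : Fin m => 1 - (γ / (N : ℝ)) • rankOne (bb a τ (j : ℕ)) := by
    funext j
    simp [bb, j.isLt]
  have h4 : (List.ofFn
        (fun j : Fin m => 1 - (γ / (N : ℝ)) • rankOne (bb a τ (j : ℕ)))).reverse.prod
      = PP ((γ : ℝ) / N) a τ m := by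
    exact ofFn_reverse_prod (fun k : ℕ => 1 - (γ / (N : ℝ)) • rankOne (bb a τ k)) m
  have h2 : ∑ j : Fin m, rankOne (a j) = SS a τ m := by
    rw [SS, ← Fin.sum_univ_eq_sum_range]
    have h3 : ∀ j : Fin m, rankOne (bb a τ (j : ℕ)) = rankOne (a (τ j)) := by
      intro j; simp [bb, j.isLt]
    simp only [h3]
    exact (Equiv.sum_comp τ (fun i => rankOne (a i))).symm
  rw [crossTerms, h1, h4, h2]
  rfl

end Defs

/-- uniform operator norm bound on the cross terms `B_τ`. -/
theorem crossTerms_norm_bound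
    (N m : ℕ) (hN : 0 < N) (hm : 2 ≤ m) (K : ℝ) (hK : 0 < K)
    (a : Fin m → EuclideanSpace ℝ (Fin N))
    (hnorm : ∀ i, ‖a i‖ = Real.sqrt N)
    (hortho : ∀ i j, i ≠ j → |⟪a i, a j⟫| ≤ K ^ 2 * Real.sqrt N * (Real.log m) ^ 2)
    (γ : ℝ) (hγ0 : 0 < γ)
    (hγ : γ ≤ (1 / (2 * m)) * Real.sqrt ((N : ℝ) / (K ^ 4 * (Real.log m) ^ 4))) :
    ∀ τ : Equiv.Perm (Fin m),
      ‖crossTerms m γ a τ‖ ≤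
        2 * γ ^ 2 * m ^ 2 * Real.sqrt (K ^ 4 * (Real.log m) ^ 4 / N) := by
  intro τ
  set c : ℝ := γ / N with hc
  set β : ℝ := K ^ 2 * (Real.log m) ^ 2 with hβ
  have hm1 : (1:ℝ) < m := by exact_mod_cast lt_of_lt_of_le one_lt_two hm
  have hlog : 0 < Real.log m := Real.log_pos hm1
  have hβ0 : 0 < β := by positivity
  have hNR : (0:ℝ) < N := by exact_mod_cast hN
  have hsN : 0 < Real.sqrt N := Real.sqrt_pos.2 hNR
  have hc0 : 0 < c := div_pos hγ0 hNR
  have hcN : c * N = γ := div_mul_cancel₀ γ hNR.ne'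
  have hNsq : Real.sqrt N * Real.sqrt N = N := Real.mul_self_sqrt hNR.le
  have hbn : ∀ i, i < m → ‖bb a τ i‖ = Real.sqrt N := by
    intro i hi; simp [bb, hi, hnorm]
  have hbo : ∀ i j, i < m → j < m → i ≠ j → |⟪bb a τ i, bb a τ j⟫| ≤ β * Real.sqrt N := by
    intro i j hi hj hij
    have hne : τ ⟨i, hi⟩ ≠ τ ⟨j, hj⟩ := by
      simp only [ne_eq, EmbeddingLike.apply_eq_iff_eq, Fin.mk.injEq]
      exact hij
    have h4 := hortho _ _ hne
    simp only [bb, dif_pos hi, dif_pos hj]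
    calc |⟪a (τ ⟨i, hi⟩), a (τ ⟨j, hj⟩)⟫| ≤ K ^ 2 * Real.sqrt N * (Real.log m) ^ 2 := h4
      _ = β * Real.sqrt N := by rw [hβ]; ring
  have hsq : Real.sqrt ((N : ℝ) / (K ^ 4 * (Real.log m) ^ 4)) = Real.sqrt N / β := by
    have h1 : (N : ℝ) / (K ^ 4 * (Real.log m) ^ 4) = (N : ℝ) / β ^ 2 := by
      rw [hβ]; ring_nf
    rw [h1, Real.sqrt_div hNR.le, Real.sqrt_sq hβ0.le]
  have hu : γ * β / Real.sqrt N ≤ 1 / (2 * m) := by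
    have h2m : (0:ℝ) < 2 * m := by positivity
    rw [hsq] at hγ
    have h5 : γ * β ≤ 1 / (2 * m) * Real.sqrt N := by
      calc γ * β ≤ (1 / (2 * m) * (Real.sqrt N / β)) * β :=
            mul_le_mul_of_nonneg_right hγ hβ0.le
        _ = 1 / (2 * m) * Real.sqrt N := by
            field_simp
    have h7 : γ * β * (2 * m) ≤ (1 / (2 * m) * Real.sqrt N) * (2 * m) :=
      mul_le_mul_of_nonneg_right h5 h2m.le
    have h8 : (1 / (2 * (m:ℝ)) * Real.sqrt N) * (2 * m) = Real.sqrt N := by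
      field_simp
    rw [div_le_div_iff₀ hsN h2m]
    linarith [h7, h8]
  have hu0 : (0:ℝ) ≤ γ * β / Real.sqrt N := by positivity
  have hku : ∀ k : ℕ, k ≤ m → (k : ℝ) * (γ * β / Real.sqrt N) ≤ 1 / 2 := by
    intro k hk
    calc (k : ℝ) * (γ * β / Real.sqrt N) ≤ (m : ℝ) * (γ * β / Real.sqrt N) := by
          gcongr <;> exact_mod_cast hk
      _ ≤ (m : ℝ) * (1 / (2 * m)) := by gcongr
      _ = 1 / 2 := by
          rw [mul_one_div, div_eq_div_iff (by positivity) (by norm_num)]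
          ring
  have key : ∀ k, k ≤ m →
      (∀ i, k ≤ i → i < m → ‖(innerSL ℝ (bb a τ i)).comp (EE c a τ k)‖ ≤ 2 * γ * k * β) ∧
      ‖EE c a τ k‖ ≤ 3 / 2 * γ ^ 2 * k ^ 2 * β / Real.sqrt N := by
    intro k
    induction k with
    | zero =>
      intro _
      have hE0 : EE c a τ 0 = 0 := by
        simp [EE, PP, SS, iterProd]
      rw [hE0]
      constructor
      · intro i _ _
        rw [ContinuousLinearMap.comp_zero, norm_zero]
        positivity
      · rw [norm_zero]
        positivity
    | succ k ih =>
      intro hk1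
      have hklt : k < m := hk1
      have hkm : k ≤ m := hklt.le
      obtain ⟨ih1, ih2⟩ := ih hkm
      have hkR : (0:ℝ) ≤ (k:ℝ) := Nat.cast_nonneg k
      have hLS : ‖(innerSL ℝ (bb a τ k)).comp (SS a τ k)‖ ≤ (k : ℝ) * (β * N) := by
        rw [SS, comp_sum']
        have hterm : ∀ j ∈ Finset.range k,
            ‖(innerSL ℝ (bb a τ k)).comp (rankOne (bb a τ j))‖ ≤ β * (N:ℝ) := by
          intro j hj
          have hjk : j < k := Finset.mem_range.mp hj
          have hjm : j < m := hjk.trans hklt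
          rw [innerSL_comp_rankOne, norm_smul_clm, innerSL_apply_norm, hbn j hjm]
          calc |⟪bb a τ k, bb a τ j⟫| * Real.sqrt N
              ≤ (β * Real.sqrt N) * Real.sqrt N := by
                gcongr
                exact hbo k j hklt hjm hjk.ne'
            _ = β * N := by rw [mul_assoc, hNsq]
        refine (norm_sum_le _ _).trans ((Finset.sum_le_sum hterm).trans ?_)
        rw [Finset.sum_const, Finset.card_range, nsmul_eq_mul]
      have hgk : ‖(innerSL ℝ (bb a τ k)).comp (EE c a τ k)‖ ≤ 2 * γ * k * β :=
        ih1 k le_rfl hklt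
      have h1P : ‖(innerSL ℝ (bb a τ k)).comp (1 - PP c a τ k)‖ ≤ 3 * γ * k * β := by
        rw [one_sub_PP, ContinuousLinearMap.comp_sub, comp_smul']
        calc ‖c • (innerSL ℝ (bb a τ k)).comp (SS a τ k)
                - (innerSL ℝ (bb a τ k)).comp (EE c a τ k)‖
            ≤ ‖c • (innerSL ℝ (bb a τ k)).comp (SS a τ k)‖
                + ‖(innerSL ℝ (bb a τ k)).comp (EE c a τ k)‖ := norm_sub_le _ _
          _ ≤ c * ((k : ℝ) * (β * N)) + 2 * γ * k * β := by
              rw [norm_smul_clm, abs_of_pos hc0]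
              exact add_le_add (mul_le_mul_of_nonneg_left hLS hc0.le) hgk
          _ = γ * k * β + 2 * γ * k * β := by
              congr 1
              calc c * ((k : ℝ) * (β * N)) = (c * N) * ((k:ℝ) * β) := by ring
                _ = γ * k * β := by rw [hcN]; ring
          _ = 3 * γ * k * β := by ring
      constructor
      · intro i hik hi
        have hikne : i ≠ k := by omega
        have hLrec : (innerSL ℝ (bb a τ i)).comp (EE c a τ (k+1))
            = (innerSL ℝ (bb a τ i)).comp (EE c a τ k)
              + c • (⟪bb a τ i, bb a τ k⟫ •
                  ((innerSL ℝ (bb a τ k)).comp (1 - PP c a τ k))) := by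
          rw [EE_succ, ContinuousLinearMap.comp_add, comp_smul', innerSL_comp_rankOne_mul]
        rw [hLrec]
        calc ‖(innerSL ℝ (bb a τ i)).comp (EE c a τ k)
                + c • (⟪bb a τ i, bb a τ k⟫ •
                    ((innerSL ℝ (bb a τ k)).comp (1 - PP c a τ k)))‖
            ≤ ‖(innerSL ℝ (bb a τ i)).comp (EE c a τ k)‖
              + c * (|⟪bb a τ i, bb a τ k⟫| *
                  ‖(innerSL ℝ (bb a τ k)).comp (1 - PP c a τ k)‖) := by
              refine (norm_add_le _ _).trans ?_
              rw [norm_smul_clm, norm_smul_clm, abs_of_pos hc0]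
          _ ≤ 2 * γ * k * β + c * ((β * Real.sqrt N) * (3 * γ * k * β)) := by
              refine add_le_add (ih1 i (Nat.le_of_succ_le hik) hi) ?_
              refine mul_le_mul_of_nonneg_left ?_ hc0.le
              exact mul_le_mul (hbo i k hi hklt hikne) h1P (norm_nonneg _) (by positivity)
          _ ≤ 2 * γ * ((k:ℕ)+1:ℕ) * β := by
              push_cast
              have h1 : (k : ℝ) * (γ * β / Real.sqrt N) ≤ 1 / 2 := hku k hkm
              have h2 : c * (β * Real.sqrt N) = γ * β / Real.sqrt N := by
                rw [hc, div_mul_eq_mul_div, div_eq_div_iff hNR.ne' hsN.ne']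
                calc γ * (β * Real.sqrt N) * Real.sqrt N
                    = γ * β * (Real.sqrt N * Real.sqrt N) := by ring
                  _ = γ * β * N := by rw [hNsq]
              have h3 : c * ((β * Real.sqrt N) * (3 * γ * k * β))
                  = 3 * ((k:ℝ) * (γ * β / Real.sqrt N)) * (γ * β) := by
                calc c * ((β * Real.sqrt N) * (3 * γ * k * β))
                    = (c * (β * Real.sqrt N)) * (3 * γ * (k:ℝ) * β) := by ring
                  _ = 3 * ((k:ℝ) * (γ * β / Real.sqrt N)) * (γ * β) := by rw [h2]; ring
              rw [h3]
              nlinarith [mul_pos hγ0 hβ0]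
      · have hEn : ‖EE c a τ (k+1)‖
            ≤ ‖EE c a τ k‖ + c * (Real.sqrt N * (3 * γ * k * β)) := by
          rw [EE_succ]
          refine (norm_add_le _ _).trans ?_
          gcongr
          rw [norm_smul_clm, abs_of_pos hc0]
          refine mul_le_mul_of_nonneg_left ?_ hc0.le
          calc ‖rankOne (bb a τ k) * (1 - PP c a τ k)‖
              ≤ ‖bb a τ k‖ * ‖(innerSL ℝ (bb a τ k)).comp (1 - PP c a τ k)‖ :=
                norm_rankOne_mul_le _ _
            _ ≤ Real.sqrt N * (3 * γ * k * β) := by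
                rw [hbn k hklt]
                exact mul_le_mul_of_nonneg_left h1P hsN.le
        have h2 : c * (Real.sqrt N * (3 * γ * (k:ℝ) * β)) = 3 * γ ^ 2 * k * β / Real.sqrt N := by
          rw [hc, div_mul_eq_mul_div, div_eq_div_iff hNR.ne' hsN.ne']
          calc γ * (Real.sqrt N * (3 * γ * (k:ℝ) * β)) * Real.sqrt N
              = 3 * γ ^ 2 * (k:ℝ) * β * (Real.sqrt N * Real.sqrt N) := by ring
            _ = 3 * γ ^ 2 * (k:ℝ) * β * N := by rw [hNsq]
        calc ‖EE c a τ (k+1)‖ ≤ ‖EE c a τ k‖ + c * (Real.sqrt N * (3 * γ * k * β)) := hEn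
          _ ≤ 3 / 2 * γ ^ 2 * (k:ℝ) ^ 2 * β / Real.sqrt N + 3 * γ ^ 2 * k * β / Real.sqrt N := by
              rw [h2]; gcongr
          _ ≤ 3 / 2 * γ ^ 2 * ((k:ℕ)+1:ℕ) ^ 2 * β / Real.sqrt N := by
              rw [← add_div, div_le_div_iff₀ hsN hsN]
              push_cast
              nlinarith [sq_nonneg γ, mul_pos (mul_pos hγ0 hγ0) hβ0]
  have hfin := (key m le_rfl).2
  have hcross : crossTerms m γ a τ = EE c a τ m := crossTerms_eq_EE γ a τ
  have hβsq : Real.sqrt (K ^ 4 * (Real.log m) ^ 4 / N) = β / Real.sqrt N := by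
    have h1 : K ^ 4 * (Real.log m) ^ 4 / (N:ℝ) = β ^ 2 / N := by rw [hβ]; ring_nf
    rw [h1, Real.sqrt_div (sq_nonneg β), Real.sqrt_sq hβ0.le]
  rw [hcross, hβsq]
  calc ‖EE c a τ m‖ ≤ 3 / 2 * γ ^ 2 * (m:ℝ) ^ 2 * β / Real.sqrt N := hfin
    _ ≤ 2 * γ ^ 2 * (m:ℝ) ^ 2 * (β / Real.sqrt N) := by
        have hx : (0:ℝ) ≤ γ ^ 2 * (m:ℝ) ^ 2 * (β / Real.sqrt N) := by positivity
        have heq : 3 / 2 * γ ^ 2 * (m:ℝ) ^ 2 * β / Real.sqrt N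
            = 3 / 2 * (γ ^ 2 * (m:ℝ) ^ 2 * (β / Real.sqrt N)) := by ring
        rw [heq, show 2 * γ ^ 2 * (m:ℝ) ^ 2 * (β / Real.sqrt N)
            = 2 * (γ ^ 2 * (m:ℝ) ^ 2 * (β / Real.sqrt N)) from by ring]
        linarith
end
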